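/- arXiv:1901.05037 — 2 statements merged into one kernel-verified Lean document; each statement's English description precedes it below -/
import Mathlib

section
/- Perturbation of supersolutions: Assume (H2) and (H3). Let V : [0,T]×ℝⁿ → ℝ be a bounded lower semicontinuous viscosity supersolution of equation (HJB1) on [0,T)×ℝⁿ. Define the constant ψ := e^T‖f‖_∞ + k, and for an integer m ≥ 1 set V_m := (1 − 1/m)V + (1/m)ψ. Then V_m is a viscosity supersolution of the perturbed equation min{U(t,x) − ∂ₜU(t,x) − LU(t,x) − e^t f(t,x), U(t,x) − (M̃U)(t,x)} − k/m = 0 on [0,T)×ℝⁿ; that is, for every (t₀,x₀) ∈ [0,T)×ℝⁿ and every φ ∈ C^{1,2}([0,T)×ℝⁿ) such that V_m − φ has a local minimum at (t₀,x₀) with V_m(t₀,x₀) = φ(t₀,x₀), one has min{V_m(t₀,x₀) − ∂ₜφ(t₀,x₀) − Lφ(t₀,x₀) − e^{t₀}f(t₀,x₀), V_m(t₀,x₀) − (M̃V_m)(t₀,x₀)} ≥ k/m. -/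
open scoped BigOperators RealInnerProductSpace
open Filter Matrix Set Topology

noncomputable section

/-- Euclidean state space ℝⁿ. -/
abbrev EucSp (n : ℕ) := EuclideanSpace ℝ (Fin n)

variable {n d : ℕ}

/-- The parabolic domain `[0, T) × ℝⁿ`. -/
def pdom (T : ℝ) (n : ℕ) : Set (ℝ × EucSp n) := Set.Ico (0 : ℝ) T ×ˢ (Set.univ : Set (EucSp n))

/-- Time derivative `∂ₜφ(t,x)`. -/
def tderiv (φ : ℝ → EucSp n → ℝ) (t : ℝ) (x : EucSp n) : ℝ :=
  deriv (fun s => φ s x) t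

/-- Spatial gradient `∇ₓφ(t,x)`. -/
def xgrad (φ : ℝ → EucSp n → ℝ) (t : ℝ) (x : EucSp n) : EucSp n :=
  gradient (fun y => φ t y) x

/-- Spatial Hessian matrix `∇ₓ²φ(t,x)`. -/
def xhess (φ : ℝ → EucSp n → ℝ) (t : ℝ) (x : EucSp n) : Matrix (Fin n) (Fin n) ℝ :=
  fun i j => fderiv ℝ (fun y => xgrad φ t y) x (EuclideanSpace.single j 1) i

/-- The second order operator `Lφ(t,x) = ⟨b, ∇ₓφ⟩ + ½ tr[σσᵀ ∇ₓ²φ]`. -/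
def Lop (b : ℝ → EucSp n → EucSp n) (σ : ℝ → EucSp n → Matrix (Fin n) (Fin d) ℝ)
    (φ : ℝ → EucSp n → ℝ) (t : ℝ) (x : EucSp n) : ℝ :=
  ⟪b t x, xgrad φ t x⟫ + (1 / 2) * (σ t x * (σ t x)ᵀ * xhess φ t x).trace

/-- `φ` is of class `C^{1,2}` on the set `s`. -/
structure IsC12On (φ : ℝ → EucSp n → ℝ) (s : Set (ℝ × EucSp n)) : Prop where
  cont : ContinuousOn (fun p : ℝ × EucSp n => φ p.1 p.2) s
  diff_t : ∀ p ∈ s, DifferentiableAt ℝ (fun t => φ t p.2) p.1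
  cont_t : ContinuousOn (fun p : ℝ × EucSp n => tderiv φ p.1 p.2) s
  diff_x : ∀ p ∈ s, DifferentiableAt ℝ (fun y => φ p.1 y) p.2
  diff_grad : ∀ p ∈ s, DifferentiableAt ℝ (fun y => xgrad φ p.1 y) p.2
  cont_grad : ContinuousOn (fun p : ℝ × EucSp n => xgrad φ p.1 p.2) s
  cont_hess : ContinuousOn (fun p : ℝ × EucSp n => xhess φ p.1 p.2) s

/-- The intervention operator `(MW)(t,x) = sup_{ξ∈K} [W(t,x+ξ) − c(t,x,ξ)]`. -/
def Mop (K : Set (EucSp n)) (c : ℝ → EucSp n → EucSp n → ℝ) (W : ℝ → EucSp n → ℝ)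
    (t : ℝ) (x : EucSp n) : ℝ :=
  sSup ((fun ξ => W t (x + ξ) - c t x ξ) '' K)

/-- The intervention operator `(M̃W)(t,x) = sup_{ξ∈K} [W(t,x+ξ) − e^t c(t,x,ξ)]`. -/
def Mtop (K : Set (EucSp n)) (c : ℝ → EucSp n → EucSp n → ℝ) (W : ℝ → EucSp n → ℝ)
    (t : ℝ) (x : EucSp n) : ℝ :=
  sSup ((fun ξ => W t (x + ξ) - Real.exp t * c t x ξ) '' K)

/-- Upper semicontinuous envelope, limits taken with `s < T`. -/
def uscEnvT (T : ℝ) (W : ℝ → EucSp n → ℝ) (t : ℝ) (x : EucSp n) : ℝ :=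
  limsup (fun p : ℝ × EucSp n => W p.1 p.2) (𝓝[{p : ℝ × EucSp n | p.1 < T}] (t, x))

/-- Lower semicontinuous envelope, limits taken with `s < T`. -/
def lscEnvT (T : ℝ) (W : ℝ → EucSp n → ℝ) (t : ℝ) (x : EucSp n) : ℝ :=
  liminf (fun p : ℝ × EucSp n => W p.1 p.2) (𝓝[{p : ℝ × EucSp n | p.1 < T}] (t, x))

/-- Quadratic form `⟨Xv, v⟩` of a matrix. -/
def qform (X : Matrix (Fin n) (Fin n) ℝ) (v : EucSp n) : ℝ :=
  ∑ i, ∑ j, X i j * v j * v i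

/-- Parabolic subjet membership: `(p,q,X) ∈ J^{2,−}V(t,x)`. -/
def InSubjet (V : ℝ → EucSp n → ℝ) (t : ℝ) (x : EucSp n)
    (p : ℝ) (q : EucSp n) (X : Matrix (Fin n) (Fin n) ℝ) : Prop :=
  X.IsSymm ∧
  ∀ ε > (0 : ℝ), ∀ᶠ sy : ℝ × EucSp n in 𝓝 (t, x),
    V sy.1 sy.2 ≥ V t x + p * (sy.1 - t) + ⟪q, sy.2 - x⟫
      + (1 / 2) * qform X (sy.2 - x) - ε * (|sy.1 - t| + ‖sy.2 - x‖ ^ 2)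

/-- Parabolic superjet membership: `(p,q,X) ∈ J^{2,+}V(t,x)`. -/
def InSuperjet (V : ℝ → EucSp n → ℝ) (t : ℝ) (x : EucSp n)
    (p : ℝ) (q : EucSp n) (X : Matrix (Fin n) (Fin n) ℝ) : Prop :=
  X.IsSymm ∧
  ∀ ε > (0 : ℝ), ∀ᶠ sy : ℝ × EucSp n in 𝓝 (t, x),
    V sy.1 sy.2 ≤ V t x + p * (sy.1 - t) + ⟪q, sy.2 - x⟫
      + (1 / 2) * qform X (sy.2 - x) + ε * (|sy.1 - t| + ‖sy.2 - x‖ ^ 2)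

/-- Viscosity supersolution of equation (HJB1) on `[0,T) × ℝⁿ` (interior condition only). -/
def IsSuperHJB1Int (T : ℝ) (b : ℝ → EucSp n → EucSp n)
    (σ : ℝ → EucSp n → Matrix (Fin n) (Fin d) ℝ)
    (f : ℝ → EucSp n → ℝ) (K : Set (EucSp n))
    (c : ℝ → EucSp n → EucSp n → ℝ) (V : ℝ → EucSp n → ℝ) : Prop :=
  ∀ t₀ x₀, (t₀, x₀) ∈ pdom T n → ∀ φ : ℝ → EucSp n → ℝ, IsC12On φ (pdom T n) →
    IsLocalMinOn (fun p : ℝ × EucSp n => V p.1 p.2 - φ p.1 p.2) (pdom T n) (t₀, x₀) →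
    0 ≤ min (V t₀ x₀ - tderiv φ t₀ x₀ - Lop b σ φ t₀ x₀ - Real.exp t₀ * f t₀ x₀)
        (V t₀ x₀ - Mtop K c V t₀ x₀)

/-!
`V_m` is the convex combination `(1 - μ) V + μ ψ`, `μ = 1/m`, of `V` and the constant `ψ`, and
`ψ` is a strict classical supersolution: `ψ - e^t f ≥ k` and `ψ - M̃ψ ≥ inf e^t c ≥ k`.
If `V_m - φ` has a local minimum and `μ < 1`, so does `V - (φ - μ ψ)/(1 - μ)`; the supersolution
inequalities of `V` for this test function, scaled by `1 - μ`, add up with the `μ`-share of the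
strict inequalities of `ψ` to give the margin `μ k`. If `μ = 1`, then `V_m = ψ` is constant, so `φ`
has a local maximum and `∂ₜφ + Lφ ≤ 0` by the first and second order conditions.
-/

theorem IsLocalMax.deriv_deriv_nonpos {g : ℝ → ℝ} {a : ℝ} (h : IsLocalMax g a)
    (hc : ContinuousAt g a) : deriv (deriv g) a ≤ 0 := by
  by_contra! hpos
  have hmin := isLocalMin_of_deriv_deriv_pos hpos h.deriv_eq_zero hc
  have hconst : g =ᶠ[𝓝 a] fun _ => g a :=
    (h.and hmin).mono fun _ hy => le_antisymm hy.1 hy.2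
  have hderiv : deriv g =ᶠ[𝓝 a] fun _ => 0 := by
    simpa using hconst.deriv
  simp [hderiv.deriv_eq] at hpos

theorem IsLocalMax.inner_fderiv_gradient_nonpos {E : Type*} [NormedAddCommGroup E]
    [InnerProductSpace ℝ E] [CompleteSpace E] {F : E → ℝ} {x₀ : E}
    (h : IsLocalMax F x₀) (hF : Differentiable ℝ F)
    (hgrad : DifferentiableAt ℝ (gradient F) x₀) (v : E) :
    ⟪fderiv ℝ (gradient F) x₀ v, v⟫ ≤ 0 := by
  have hline : ∀ s : ℝ, HasDerivAt (fun s : ℝ => x₀ + s • v) v s := fun s => by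
    simpa using ((hasDerivAt_id s).smul_const v).const_add x₀
  have hderiv : deriv (fun s : ℝ => F (x₀ + s • v)) = fun s => ⟪gradient F (x₀ + s • v), v⟫ := by
    funext s
    refine ((hF _).hasGradientAt.hasFDerivAt.comp_hasDerivAt s (hline s)).deriv.trans ?_
    simp
  have hderiv2 : HasDerivAt (fun s : ℝ => ⟪gradient F (x₀ + s • v), v⟫)
      ⟪fderiv ℝ (gradient F) x₀ v, v⟫ 0 := by
    have hgrad0 : HasFDerivAt (gradient F) (fderiv ℝ (gradient F) x₀) (x₀ + (0 : ℝ) • v) := by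
      simpa using hgrad.hasFDerivAt
    simpa using (hgrad0.comp_hasDerivAt 0 (hline 0)).inner ℝ (hasDerivAt_const 0 v)
  have hmax : IsLocalMax (fun s : ℝ => F (x₀ + s • v)) 0 :=
    IsLocalMax.comp_continuous (g := fun s : ℝ => x₀ + s • v) (by simpa using h)
      (hline 0).continuousAt
  have := hmax.deriv_deriv_nonpos (hF.continuous.continuousAt.comp (hline 0).continuousAt)
  rwa [hderiv, hderiv2.deriv] at this

theorem IsLocalMaxOn.deriv_nonpos {g : ℝ → ℝ} {s : Set ℝ} {a : ℝ} (h : IsLocalMaxOn g s a)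
    (hs : ∃ᶠ x in 𝓝[>] a, x ∈ s) (hd : DifferentiableAt ℝ g a) : deriv g a ≤ 0 := by
  simpa using h.hasFDerivWithinAt_nonpos hd.hasFDerivAt.hasFDerivWithinAt
    (one_mem_posTangentConeAt_iff_frequently.2 hs)

theorem qform_eq_inner (A : EucSp n →L[ℝ] EucSp n) (v : EucSp n) :
    qform (fun i j => A (EuclideanSpace.single j 1) i) v = ⟪A v, v⟫ := by
  have hAv : ∀ i, A v i = ∑ j, v j * A (EuclideanSpace.single j 1) i := by
    intro i
    conv_lhs => rw [← (EuclideanSpace.basisFun (Fin n) ℝ).sum_repr v]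
    simp [map_sum]
  simp only [qform, PiLp.inner_apply, RCLike.inner_apply, conj_trivial, hAv, Finset.mul_sum]
  exact Finset.sum_congr rfl fun i _ => Finset.sum_congr rfl fun j _ => by ring

theorem trace_mul_transpose_mul_nonpos {σ : Matrix (Fin n) (Fin d) ℝ}
    {H : Matrix (Fin n) (Fin n) ℝ} (hH : ∀ v : EucSp n, qform H v ≤ 0) :
    (σ * σᵀ * H).trace ≤ 0 := by
  have hcol : (σ * σᵀ * H).trace = ∑ l, qform H (WithLp.toLp 2 fun i => σ i l) := by
    rw [Matrix.mul_assoc, Matrix.trace_mul_comm]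
    simp only [Matrix.trace, Matrix.diag, Matrix.mul_apply, Matrix.transpose_apply, qform,
      Finset.sum_mul]
    exact Finset.sum_congr rfl fun l _ => by
      rw [Finset.sum_comm]
      exact Finset.sum_congr rfl fun i _ => Finset.sum_congr rfl fun j _ => by ring
  rw [hcol]
  exact Finset.sum_nonpos fun l _ => hH _

theorem IsC12On.tderiv_add_Lop_nonpos {T : ℝ} {φ : ℝ → EucSp n → ℝ} (hφ : IsC12On φ (pdom T n))
    (b : ℝ → EucSp n → EucSp n) (σ : ℝ → EucSp n → Matrix (Fin n) (Fin d) ℝ)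
    {t₀ : ℝ} {x₀ : EucSp n} (hp : (t₀, x₀) ∈ pdom T n)
    (hmax : IsLocalMaxOn (fun p : ℝ × EucSp n => φ p.1 p.2) (pdom T n) (t₀, x₀)) :
    tderiv φ t₀ x₀ + Lop b σ φ t₀ x₀ ≤ 0 := by
  have ht₀ : t₀ ∈ Ico 0 T := hp.1
  have hslice : ∀ y : EucSp n, (t₀, y) ∈ pdom T n := fun _ => ⟨ht₀, mem_univ _⟩
  have htime : IsLocalMaxOn (fun s => φ s x₀) (Ico 0 T) t₀ :=
    hmax.comp_continuousOn (g := fun s => (s, x₀)) (fun _ hs => ⟨hs, mem_univ _⟩)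
      (by fun_prop) ht₀
  have hspace : IsLocalMax (fun y => φ t₀ y) x₀ := by
    have := hmax.comp_continuousOn (g := fun y => (t₀, y)) (fun y _ => hslice y)
      (by fun_prop) (mem_univ x₀)
    exact isLocalMaxOn_univ_iff.1 this
  have hdt : tderiv φ t₀ x₀ ≤ 0 := by
    refine htime.deriv_nonpos ?_ (hφ.diff_t _ hp)
    refine Filter.Eventually.frequently ?_
    filter_upwards [Ioo_mem_nhdsGT ht₀.2] with s hs using ⟨ht₀.1.trans hs.1.le, hs.2⟩
  have hgrad : xgrad φ t₀ x₀ = 0 := by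
    simp [xgrad, gradient, hspace.fderiv_eq_zero]
  have hhess : ∀ v, qform (xhess φ t₀ x₀) v ≤ 0 := fun v => by
    unfold xhess
    rw [qform_eq_inner]
    exact hspace.inner_fderiv_gradient_nonpos (fun y => hφ.diff_x _ (hslice y))
      (hφ.diff_grad _ hp) v
  have hL : Lop b σ φ t₀ x₀ ≤ 0 := by
    rw [Lop, hgrad, inner_zero_right, zero_add]
    exact mul_nonpos_of_nonneg_of_nonpos (by norm_num) (trace_mul_transpose_mul_nonpos hhess)
  linarith

section Rescaling

variable (φ : ℝ → EucSp n → ℝ) (a C : ℝ)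

theorem tderiv_const_mul_add_const (t : ℝ) (x : EucSp n) :
    tderiv (fun s y => a * φ s y + C) t x = a * tderiv φ t x := by
  rw [tderiv, tderiv, deriv_add_const, deriv_const_mul_field]

theorem xgrad_const_mul_add_const {t : ℝ} {x : EucSp n}
    (hx : DifferentiableAt ℝ (fun y => φ t y) x) :
    xgrad (fun s y => a * φ s y + C) t x = a • xgrad φ t x := by
  simp only [xgrad, gradient, fderiv_add_const, fderiv_const_mul hx, map_smul]

theorem xhess_const_mul_add_const {t : ℝ} {x : EucSp n}
    (hdiff : ∀ y, DifferentiableAt ℝ (fun y => φ t y) y)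
    (hgrad : DifferentiableAt ℝ (fun y => xgrad φ t y) x) :
    xhess (fun s y => a * φ s y + C) t x = a • xhess φ t x := by
  have hg : (fun y => xgrad (fun s y => a * φ s y + C) t y) = fun y => a • xgrad φ t y :=
    funext fun y => xgrad_const_mul_add_const φ a C (hdiff y)
  funext i j
  simp only [xhess, hg, fderiv_fun_const_smul hgrad, Matrix.smul_apply,
    _root_.smul_apply, PiLp.smul_apply]

theorem Lop_const_mul_add_const (b : ℝ → EucSp n → EucSp n)
    (σ : ℝ → EucSp n → Matrix (Fin n) (Fin d) ℝ) {t : ℝ} {x : EucSp n}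
    (hdiff : ∀ y, DifferentiableAt ℝ (fun y => φ t y) y)
    (hgrad : DifferentiableAt ℝ (fun y => xgrad φ t y) x) :
    Lop b σ (fun s y => a * φ s y + C) t x = a * Lop b σ φ t x := by
  rw [Lop, Lop, xgrad_const_mul_add_const φ a C (hdiff x),
    xhess_const_mul_add_const φ a C hdiff hgrad, real_inner_smul_right, Matrix.mul_smul,
    Matrix.trace_smul, smul_eq_mul]
  ring

variable {φ} in
theorem IsC12On.const_mul_add_const {T : ℝ} (hφ : IsC12On φ (pdom T n)) :
    IsC12On (fun s y => a * φ s y + C) (pdom T n) := by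
  have hslice : ∀ p ∈ pdom T n, ∀ y : EucSp n, (p.1, y) ∈ pdom T n :=
    fun _ hp _ => ⟨hp.1, mem_univ _⟩
  have hgrad : ∀ p ∈ pdom T n, (fun y => xgrad (fun s y => a * φ s y + C) p.1 y)
      = fun y => a • xgrad φ p.1 y :=
    fun p hp => funext fun y => xgrad_const_mul_add_const φ a C (hφ.diff_x _ (hslice p hp y))
  refine ⟨?_, fun p hp => ?_, ?_, fun p hp => ?_, fun p hp => ?_, ?_, ?_⟩
  · exact (continuousOn_const.mul hφ.cont).add continuousOn_const
  · exact ((hφ.diff_t p hp).const_mul a).add_const C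
  · simp only [tderiv_const_mul_add_const]
    exact continuousOn_const.mul hφ.cont_t
  · exact ((hφ.diff_x p hp).const_mul a).add_const C
  · rw [hgrad p hp]
    exact (hφ.diff_grad p hp).const_smul a
  · refine (hφ.cont_grad.const_smul a).congr fun p hp => ?_
    exact xgrad_const_mul_add_const φ a C (hφ.diff_x p hp)
  · refine (hφ.cont_hess.const_smul a).congr fun p hp => ?_
    exact xhess_const_mul_add_const φ a C (fun y => hφ.diff_x _ (hslice p hp y))
      (hφ.diff_grad p hp)

end Rescaling

theorem IsSuperHJB1Int.tderiv_add_Lop_le {T : ℝ} {b : ℝ → EucSp n → EucSp n}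
    {σ : ℝ → EucSp n → Matrix (Fin n) (Fin d) ℝ} {f : ℝ → EucSp n → ℝ} {K : Set (EucSp n)}
    {c : ℝ → EucSp n → EucSp n → ℝ} {V : ℝ → EucSp n → ℝ}
    (hV : IsSuperHJB1Int T b σ f K c V) {lam C : ℝ} (hlam : 0 ≤ lam)
    {t₀ : ℝ} {x₀ : EucSp n} (hp : (t₀, x₀) ∈ pdom T n)
    {φ : ℝ → EucSp n → ℝ} (hφ : IsC12On φ (pdom T n))
    (hmin : IsLocalMinOn (fun p : ℝ × EucSp n => lam * V p.1 p.2 + C - φ p.1 p.2)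
      (pdom T n) (t₀, x₀)) :
    tderiv φ t₀ x₀ + Lop b σ φ t₀ x₀ ≤ lam * (V t₀ x₀ - Real.exp t₀ * f t₀ x₀) ∧
      lam * Mtop K c V t₀ x₀ ≤ lam * V t₀ x₀ := by
  rcases hlam.eq_or_lt with rfl | hpos
  · have hmax : IsLocalMaxOn (fun p : ℝ × EucSp n => φ p.1 p.2) (pdom T n) (t₀, x₀) := by
      filter_upwards [hmin] with p hp
      simp only [zero_mul, zero_add, sub_le_sub_iff_left] at hp
      exact hp
    simpa using hφ.tderiv_add_Lop_nonpos b σ hp hmax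
  · have hslice : ∀ y : EucSp n, (t₀, y) ∈ pdom T n := fun _ => ⟨hp.1, mem_univ _⟩
    have hmin' : IsLocalMinOn
        (fun p : ℝ × EucSp n => V p.1 p.2 - (lam⁻¹ * φ p.1 p.2 + -(lam⁻¹ * C))) (pdom T n)
        (t₀, x₀) := by
      have hrescale : ∀ t y, V t y - (lam⁻¹ * φ t y + -(lam⁻¹ * C))
          = lam⁻¹ * (lam * V t y + C - φ t y) := fun t y => by
        field_simp
        ring
      filter_upwards [hmin] with p hp
      rw [hrescale, hrescale]
      exact mul_le_mul_of_nonneg_left hp (inv_nonneg.2 hpos.le)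
    have hsup := le_min_iff.1 (hV t₀ x₀ hp _ (hφ.const_mul_add_const _ _) hmin')
    rw [tderiv_const_mul_add_const, Lop_const_mul_add_const _ _ _ _ _
      (fun y => hφ.diff_x _ (hslice y)) (hφ.diff_grad _ hp)] at hsup
    refine ⟨(inv_mul_le_iff₀ hpos).1 ?_, mul_le_mul_of_nonneg_left (sub_nonneg.1 hsup.2) hpos.le⟩
    rw [mul_add]
    linarith [hsup.1]

theorem Mtop_const_mul_add_const_le {K : Set (EucSp n)} (hK : K.Nonempty)
    {c : ℝ → EucSp n → EucSp n → ℝ} {W : ℝ → EucSp n → ℝ} {t : ℝ} {x : EucSp n}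
    (hW : BddAbove (range (W t))) {k : ℝ} (hk : 0 ≤ k)
    (hc : ∀ ξ ∈ K, k ≤ Real.exp t * c t x ξ) {lam : ℝ} (hlam₀ : 0 ≤ lam) (hlam₁ : lam ≤ 1)
    (C : ℝ) :
    Mtop K c (fun s y => lam * W s y + C) t x ≤ lam * Mtop K c W t x + C - (1 - lam) * k := by
  obtain ⟨B, hB⟩ := hW
  have hbdd : BddAbove ((fun ξ => W t (x + ξ) - Real.exp t * c t x ξ) '' K) := by
    refine ⟨B, ?_⟩
    rintro _ ⟨ξ, hξ, rfl⟩
    linarith [hB (mem_range_self (x + ξ)), hc ξ hξ]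
  refine csSup_le (hK.image _) ?_
  rintro _ ⟨ξ, hξ, rfl⟩
  have hle : W t (x + ξ) - Real.exp t * c t x ξ ≤ Mtop K c W t x := le_csSup hbdd ⟨ξ, hξ, rfl⟩
  linarith [mul_le_mul_of_nonneg_left hle hlam₀, mul_le_mul_of_nonneg_left (hc ξ hξ)
    (sub_nonneg.2 hlam₁)]

theorem exp_mul_le_exp_mul_sSup_abs {f : ℝ → EucSp n → ℝ} (hf : ∃ C, ∀ t x, |f t x| ≤ C)
    {T t : ℝ} (ht : t ∈ Icc 0 T) (x : EucSp n) :
    Real.exp t * f t x ≤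
      Real.exp T * sSup ((fun p : ℝ × EucSp n => |f p.1 p.2|) '' (Icc 0 T ×ˢ univ)) := by
  obtain ⟨B, hB⟩ := hf
  have hS : |f t x| ≤ sSup ((fun p : ℝ × EucSp n => |f p.1 p.2|) '' (Icc 0 T ×ˢ univ)) :=
    le_csSup ⟨B, by rintro _ ⟨p, -, rfl⟩; exact hB _ _⟩ ⟨(t, x), ⟨ht, mem_univ x⟩, rfl⟩
  calc Real.exp t * f t x ≤ Real.exp t * sSup _ :=
        mul_le_mul_of_nonneg_left ((le_abs_self _).trans hS) (Real.exp_pos t).le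
    _ ≤ Real.exp T * sSup _ :=
        mul_le_mul_of_nonneg_right (Real.exp_le_exp.2 ht.2) ((abs_nonneg _).trans hS)

theorem perturbed_supersolution_general
    {n d : ℕ} (T : ℝ)
    (b : ℝ → EucSp n → EucSp n) (σ : ℝ → EucSp n → Matrix (Fin n) (Fin d) ℝ)
    (f : ℝ → EucSp n → ℝ)
    -- (H2) for f
    (hf_bdd : ∃ C, ∀ t x, |f t x| ≤ C)
    -- (H3)
    (K : Set (EucSp n)) (hK : K.Nonempty)
    (c : ℝ → EucSp n → EucSp n → ℝ)
    (k : ℝ) (hk : 0 < k) (hck : ∀ t x, ∀ ξ ∈ K, k ≤ c t x ξ)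
    -- the supersolution V
    (V : ℝ → EucSp n → ℝ)
    (hV_bdd : ∃ C, ∀ t x, |V t x| ≤ C)
    (hV_sup : IsSuperHJB1Int T b σ f K c V)
    -- the constant ψ = e^T ‖f‖_∞ + k and the perturbation V_m
    (ψ : ℝ)
    (hψ : ψ = Real.exp T *
      sSup ((fun p : ℝ × EucSp n => |f p.1 p.2|) '' (Set.Icc 0 T ×ˢ Set.univ)) + k)
    (m : ℕ)
    (Vm : ℝ → EucSp n → ℝ)
    (hVm : Vm = fun t x => (1 - 1/(m:ℝ)) * V t x + (1/(m:ℝ)) * ψ) :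
    ∀ t₀ x₀, (t₀, x₀) ∈ pdom T n → ∀ φ : ℝ → EucSp n → ℝ, IsC12On φ (pdom T n) →
      IsLocalMinOn (fun p : ℝ × EucSp n => Vm p.1 p.2 - φ p.1 p.2) (pdom T n) (t₀, x₀) →
      Vm t₀ x₀ = φ t₀ x₀ →
      k / m ≤ min (Vm t₀ x₀ - tderiv φ t₀ x₀ - Lop b σ φ t₀ x₀ - Real.exp t₀ * f t₀ x₀)
          (Vm t₀ x₀ - Mtop K c Vm t₀ x₀) := by
  intro t₀ x₀ hp φ hφ hmin _
  subst hVm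
  set μ : ℝ := 1 / (m : ℝ) with hμ
  have hμ₀ : 0 ≤ μ := by positivity
  have hμ₁ : μ ≤ 1 := by simpa [hμ] using Nat.cast_inv_le_one (α := ℝ) m
  have ht₀ : t₀ ∈ Icc 0 T := ⟨hp.1.1, hp.1.2.le⟩
  obtain ⟨hdyn, hint⟩ := hV_sup.tderiv_add_Lop_le (sub_nonneg.2 hμ₁) hp hφ hmin
  obtain ⟨B, hB⟩ := hV_bdd
  have hM := Mtop_const_mul_add_const_le hK (W := V)
    ⟨B, by rintro _ ⟨y, rfl⟩; exact le_of_abs_le (hB t₀ y)⟩ hk.le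
    (fun ξ hξ => (hck t₀ x₀ ξ hξ).trans
      (le_mul_of_one_le_left (hk.le.trans (hck t₀ x₀ ξ hξ)) (Real.one_le_exp ht₀.1)))
    (sub_nonneg.2 hμ₁) (by linarith) (μ * ψ)
  have hψf : k ≤ ψ - Real.exp t₀ * f t₀ x₀ := by
    linarith [exp_mul_le_exp_mul_sSup_abs hf_bdd ht₀ x₀]
  rw [div_eq_mul_one_div, mul_comm, ← hμ]
  refine le_min ?_ ?_
  · linarith [mul_le_mul_of_nonneg_left hψf hμ₀]
  · linarith

/-- **Perturbation of supersolutions**: if `V` is a bounded lsc viscosity supersolution of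
(HJB1), then `V_m = (1 − 1/m) V + (1/m) ψ`, where `ψ = e^T ‖f‖_∞ + k`, is a viscosity
supersolution of the perturbed equation `min{…} − k/m = 0` on `[0,T) × ℝⁿ`. -/
theorem perturbed_supersolution
    {n d : ℕ} (T : ℝ) (hT : 0 < T)
    (b : ℝ → EucSp n → EucSp n) (σ : ℝ → EucSp n → Matrix (Fin n) (Fin d) ℝ)
    (f : ℝ → EucSp n → ℝ)
    -- (H2) for f
    (hf_bdd : ∃ C, ∀ t x, |f t x| ≤ C)
    (hf_uc : UniformContinuousOn (fun p : ℝ × EucSp n => f p.1 p.2)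
      (Set.Icc 0 T ×ˢ Set.univ))
    -- (H3)
    (K : Set (EucSp n)) (hK : K.Nonempty) (hKcomp : IsCompact K)
    (c : ℝ → EucSp n → EucSp n → ℝ)
    (hc_uc : UniformContinuousOn (fun p : ℝ × EucSp n × EucSp n => c p.1 p.2.1 p.2.2)
      (Set.Icc 0 T ×ˢ Set.univ ×ˢ K))
    (k : ℝ) (hk : 0 < k) (hck : ∀ t x, ∀ ξ ∈ K, k ≤ c t x ξ)
    -- the supersolution V
    (V : ℝ → EucSp n → ℝ)
    (hV_bdd : ∃ C, ∀ t x, |V t x| ≤ C)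
    (hV_lsc : LowerSemicontinuousOn (fun p : ℝ × EucSp n => V p.1 p.2)
      (Set.Icc 0 T ×ˢ Set.univ))
    (hV_sup : IsSuperHJB1Int T b σ f K c V)
    -- the constant ψ = e^T ‖f‖_∞ + k and the perturbation V_m
    (ψ : ℝ)
    (hψ : ψ = Real.exp T *
      sSup ((fun p : ℝ × EucSp n => |f p.1 p.2|) '' (Set.Icc 0 T ×ˢ Set.univ)) + k)
    (m : ℕ) (hm : 1 ≤ m)
    (Vm : ℝ → EucSp n → ℝ)
    (hVm : Vm = fun t x => (1 - 1/(m:ℝ)) * V t x + (1/(m:ℝ)) * ψ) :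
    ∀ t₀ x₀, (t₀, x₀) ∈ pdom T n → ∀ φ : ℝ → EucSp n → ℝ, IsC12On φ (pdom T n) →
      IsLocalMinOn (fun p : ℝ × EucSp n => Vm p.1 p.2 - φ p.1 p.2) (pdom T n) (t₀, x₀) →
      Vm t₀ x₀ = φ t₀ x₀ →
      k / m ≤ min (Vm t₀ x₀ - tderiv φ t₀ x₀ - Lop b σ φ t₀ x₀ - Real.exp t₀ * f t₀ x₀)
          (Vm t₀ x₀ - Mtop K c Vm t₀ x₀) :=
  perturbed_supersolution_general T b σ f hf_bdd K hK c k hk hck V hV_bdd hV_sup ψ hψ m Vm hVm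
end
end

section
/- Terminal-time identification: Let K ⊆ ℝⁿ be a nonempty compact set, k > 0, and c : ℝⁿ×K → ℝ a continuous function with c(x,ξ) ≥ k for all (x,ξ). Let g : ℝⁿ → ℝ and let W : ℝⁿ → ℝ be bounded and upper semicontinuous. Assume: (i) for every x ∈ ℝⁿ, min{ W(x) − g(x), W(x) − sup_{ξ∈K}[W(x+ξ) − c(x,ξ)] } = 0; and (ii) for every x ∈ ℝⁿ, sup_{ξ∈K}[g(x+ξ) − c(x,ξ)] ≤ g(x). Then W(x) = g(x) for every x ∈ ℝⁿ. -/
open scoped BigOperators RealInnerProductSpace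
open Filter Matrix Set Topology

noncomputable section

variable {n d : ℕ}

/-!
Since `min {W - g, W - MW} = 0`, we have `g ≤ W`, and `W = MW` wherever `g < W`. At such a
point take an almost optimal impulse `ξ`. If it landed where `W = g`, hypothesis (ii) would give
`W x ≈ g (x + ξ) - c x ξ ≤ Mg x ≤ g x`, contradicting `g x < W x`; so it lands in `{g < W}` again,
at a point where `W` is larger by almost `c x ξ ≥ k`. Starting near the supremum of the bounded
function `W` over `{g < W}`, such a gain would overshoot it, so `{g < W}` is empty.
-/

section InterventionOperator

variable {E : Type*} [Add E]

def interventionOp (K : Set E) (c : E → E → ℝ) (f : E → ℝ) (x : E) : ℝ :=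
  sSup ((fun ξ => f (x + ξ) - c x ξ) '' K)

theorem bddAbove_intervention_image {K : Set E} {c : E → E → ℝ} {f : E → ℝ} {x : E}
    {C k : ℝ} (hf : ∀ y, f y ≤ C) (hck : ∀ ξ ∈ K, k ≤ c x ξ) :
    BddAbove ((fun ξ => f (x + ξ) - c x ξ) '' K) := by
  refine ⟨C - k, ?_⟩
  rintro _ ⟨ξ, hξ, rfl⟩
  linarith [hf (x + ξ), hck ξ hξ]

theorem exists_add_le_of_eq_interventionOp {K : Set E} {c : E → E → ℝ} {g W : E → ℝ}
    {x : E} {k ε : ℝ} (hK : K.Nonempty) (hck : ∀ ξ ∈ K, k ≤ c x ξ) (hε : ε < k)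
    (hgW : ∀ y, g y ≤ W y) (hg_bdd : BddAbove ((fun ξ => g (x + ξ) - c x ξ) '' K))
    (hgx : interventionOp K c g x ≤ g x) (hWx : W x = interventionOp K c W x)
    (hlt : g x < W x) :
    ∃ y, g y < W y ∧ W x + ε ≤ W y := by
  set δ := min (k - ε) (W x - g x)
  have hδ : 0 < δ := lt_min (by linarith) (by linarith)
  obtain ⟨_, ⟨ξ, hξ, rfl⟩, hξ_opt⟩ :
      ∃ a ∈ (fun ξ => W (x + ξ) - c x ξ) '' K, W x - δ < a :=
    exists_lt_of_lt_csSup (hK.image _) (by rw [← interventionOp, ← hWx]; linarith)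
  refine ⟨x + ξ, lt_of_le_of_ne (hgW _) fun h_land => ?_, ?_⟩
  · have : g (x + ξ) - c x ξ ≤ g x := (le_csSup hg_bdd ⟨ξ, hξ, rfl⟩).trans hgx
    have : δ ≤ W x - g x := min_le_right _ _
    simp only [← h_land] at hξ_opt
    linarith
  · have : δ ≤ k - ε := min_le_left _ _
    linarith [hck ξ hξ]

end InterventionOperator

theorem false_of_forall_exists_add_le {α : Type*} {A : Set α} {f : α → ℝ} {ε : ℝ}
    (hA : A.Nonempty) (hf : BddAbove (f '' A)) (hε : 0 < ε)
    (h : ∀ x ∈ A, ∃ y ∈ A, f x + ε ≤ f y) : False := by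
  obtain ⟨_, ⟨x, hx, rfl⟩, hx_near⟩ :=
    exists_lt_of_lt_csSup (hA.image f) (sub_lt_self (sSup (f '' A)) hε)
  obtain ⟨y, hy, hxy⟩ := h x hx
  linarith [le_csSup hf ⟨y, hy, rfl⟩]

theorem terminal_time_identification_general
    {n : ℕ} (K : Set (EucSp n)) (hK : K.Nonempty)
    (k : ℝ) (hk : 0 < k)
    (c : EucSp n → EucSp n → ℝ)
    (hck : ∀ x ξ, k ≤ c x ξ)
    (g : EucSp n → ℝ) (W : EucSp n → ℝ)
    (hW_bdd : ∃ C, ∀ x, |W x| ≤ C)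
    (h1 : ∀ x, min (W x - g x) (W x - sSup ((fun ξ => W (x + ξ) - c x ξ) '' K)) = 0)
    (h2 : ∀ x, sSup ((fun ξ => g (x + ξ) - c x ξ) '' K) ≤ g x) :
    ∀ x, W x = g x := by
  change ∀ x, min (W x - g x) (W x - interventionOp K c W x) = 0 at h1
  change ∀ x, interventionOp K c g x ≤ g x at h2
  obtain ⟨C, hC⟩ := hW_bdd
  have hWC : ∀ x, W x ≤ C := fun x => (abs_le.mp (hC x)).2
  have hgW : ∀ x, g x ≤ W x := fun x => by
    linarith [h1 x ▸ min_le_left (W x - g x) (W x - interventionOp K c W x)]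
  have hW_eq : ∀ x, g x < W x → W x = interventionOp K c W x := fun x hx => by
    rcases min_eq_iff.mp (h1 x) with ⟨h, -⟩ | ⟨h, -⟩ <;> linarith
  by_contra! ⟨x₀, hx₀⟩
  refine false_of_forall_exists_add_le (A := {x | g x < W x}) (f := W) (ε := k / 2)
    ⟨x₀, lt_of_le_of_ne (hgW x₀) (Ne.symm hx₀)⟩ ⟨C, by rintro _ ⟨x, -, rfl⟩; exact hWC x⟩
    (by linarith) fun x hx => ?_
  have hck_x : ∀ ξ ∈ K, k ≤ c x ξ := fun ξ _ => hck x ξ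
  exact exists_add_le_of_eq_interventionOp hK hck_x (by linarith) hgW
    (bddAbove_intervention_image (fun y => (hgW y).trans (hWC y)) hck_x) (h2 x)
    (hW_eq x hx) hx

/-- **Terminal-time identification**: if a bounded usc `W` satisfies
`min{W − g, W − sup_{ξ∈K}[W(·+ξ) − c(·,ξ)]} = 0` and no impulse at maturity is profitable
(`sup_{ξ∈K}[g(x+ξ) − c(x,ξ)] ≤ g(x)`), then `W = g`. -/
theorem terminal_time_identification
    {n : ℕ} (K : Set (EucSp n)) (hK : K.Nonempty) (hKcomp : IsCompact K)
    (k : ℝ) (hk : 0 < k)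
    (c : EucSp n → EucSp n → ℝ)
    (hc_cont : Continuous fun p : EucSp n × EucSp n => c p.1 p.2)
    (hck : ∀ x ξ, k ≤ c x ξ)
    (g : EucSp n → ℝ) (W : EucSp n → ℝ)
    (hW_bdd : ∃ C, ∀ x, |W x| ≤ C)
    (hW_usc : UpperSemicontinuous W)
    (h1 : ∀ x, min (W x - g x) (W x - sSup ((fun ξ => W (x + ξ) - c x ξ) '' K)) = 0)
    (h2 : ∀ x, sSup ((fun ξ => g (x + ξ) - c x ξ) '' K) ≤ g x) :
    ∀ x, W x = g x :=
  terminal_time_identification_general K hK k hk c hck g W hW_bdd h1 h2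
end
end
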